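/- Let n ≥ 2, 0 < α, β < 2, 1 ≤ p < ∞, and let u ∈ C^{1,1}_loc ∩ L_α, v ∈ C^{1,1}_loc ∩ L_β be a positive solution pair of the system (-Δ)^{α/2}u + u = v u^{p-1}, (-Δ)^{β/2}v = u^p on ℝⁿ. Assume there exist constants C₁ > 0, γ > 0, and R > 0 such that u(x) ≥ C₁/|x|^γ for all |x| ≥ R. Let λ ∈ ℝ and let x̄ ∈ Σ_λ satisfy |x̄| ≥ R and U_λ(x̄) < 0. Then (-Δ)^{α/2}U_λ(x̄) ≥ u^{p-1}(x̄^λ) V_λ(x̄) + ((p/C₁) · u^{p-1}(x̄) · v(x̄) · |x̄|^γ − 1) · U_λ(x̄). -/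

import Mathlib

/-!
The reflection `x ↦ x^λ` is an isometry of `ℝⁿ`, hence preserves Lebesgue measure, so the
truncated integrals of `u ∘ (·)^λ` at `x̄` are those of `u` at `x̄^λ`. By linearity,
`(-Δ)^{α/2} U_λ (x̄)` is then the difference of the right-hand sides of the `u`-equation at `x̄^λ`
and at `x̄`, and the estimate becomes pointwise: for `a = u(x̄^λ) < b = u(x̄)`, Bernoulli's
inequality gives `b^{p-1} - a^{p-1} ≤ p b^{p-1} (b - a) / b`, and the decay of `u` bounds `1 / b`
by `|x̄|^γ / C₁`.
-/

open MeasureTheory Filter Metric Set Bornology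

noncomputable section

/-- The space `ℝⁿ`. -/
abbrev En (n : ℕ) := EuclideanSpace ℝ (Fin n)

/-- Membership in the weighted space `L_σ`. -/
def MemL (n : ℕ) (σ : ℝ) (w : En n → ℝ) : Prop :=
  LocallyIntegrable w volume ∧
    Integrable (fun x : En n => |w x| / (1 + ‖x‖ ^ ((n : ℝ) + σ))) volume

/-- `C^{1,1}_loc` on an open set `Ω`: near every point of `Ω`, `w` is
differentiable with Lipschitz-continuous derivative. -/
def C11locOn (n : ℕ) (Ω : Set (En n)) (w : En n → ℝ) : Prop :=
  ∀ x ∈ Ω, ∃ ε > 0, ∃ K : NNReal, ball x ε ⊆ Ω ∧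
    (∀ y ∈ ball x ε, DifferentiableAt ℝ w y) ∧
    LipschitzOnWith K (fderiv ℝ w) (ball x ε)

/-- `C^{1,1}_loc` on all of `ℝⁿ`. -/
def C11loc (n : ℕ) (w : En n → ℝ) : Prop := C11locOn n univ w

/-- `HasFracLap n σ c w x L` : the fractional Laplacian `(-Δ)^{σ/2} w`, with
normalization constant `c = C_{n,σ} > 0`, exists at `x` as a principal value
and is equal to `L`. -/
def HasFracLap (n : ℕ) (σ c : ℝ) (w : En n → ℝ) (x : En n) (L : ℝ) : Prop :=
  Tendsto
    (fun ε : ℝ => c * ∫ y in {y : En n | ε ≤ dist x y},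
        (w x - w y) / dist x y ^ ((n : ℝ) + σ))
    (nhdsWithin 0 (Ioi 0)) (nhds L)

/-- Reflection `x ↦ x^λ` about the hyperplane `T_λ = {x : x₁ = λ}`. -/
def reflPt (n : ℕ) [NeZero n] (l : ℝ) (x : En n) : En n :=
  WithLp.toLp 2 (fun i => if i = 0 then 2 * l - x 0 else x i)

/-- The half space `Σ_λ = {x : x₁ < λ}`. -/
def halfSpace (n : ℕ) [NeZero n] (l : ℝ) : Set (En n) := {x | x 0 < l}

lemma rpow_sub_one_sub_rpow_sub_one_le {p a b : ℝ} (hp : 1 ≤ p) (ha : 0 < a) (hab : a ≤ b) :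
    b ^ (p - 1) - a ^ (p - 1) ≤ p * b ^ (p - 1) * (b - a) / b := by
  have hb : 0 < b := ha.trans_le hab
  set t := a / b with ht
  have ht0 : 0 < t := div_pos ha hb
  have ht1 : t ≤ 1 := (div_le_one hb).2 hab
  have hbernoulli : 1 + p * (t - 1) ≤ t ^ p := by
    simpa using one_add_mul_self_le_rpow_one_add (by linarith : (-1 : ℝ) ≤ t - 1) hp
  have hmono : t ^ p ≤ t ^ (p - 1) := Real.rpow_le_rpow_of_exponent_ge ht0 ht1 (by linarith)
  have hdiv : a ^ (p - 1) = b ^ (p - 1) * t ^ (p - 1) := by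
    rw [ht, Real.div_rpow ha.le hb.le, mul_div_cancel₀ _ (Real.rpow_pos_of_pos hb _).ne']
  calc b ^ (p - 1) - a ^ (p - 1) = b ^ (p - 1) * (1 - t ^ (p - 1)) := by rw [hdiv]; ring
    _ ≤ b ^ (p - 1) * (p * (1 - t)) := by gcongr; linarith
    _ = p * b ^ (p - 1) * (b - a) / b := by rw [ht]; field_simp

theorem IsometryEquiv.measurePreserving_volume {V : Type*} [NormedAddCommGroup V]
    [InnerProductSpace ℝ V] [FiniteDimensional ℝ V] [MeasurableSpace V] [BorelSpace V]
    (e : V ≃ᵢ V) : MeasurePreserving e volume volume := by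
  simpa only [InnerProductSpace.euclideanHausdorffMeasure_eq_volume] using
    e.measurePreserving_euclideanHausdorffMeasure (Module.finrank ℝ V)

section Reflection

variable (n : ℕ) [NeZero n] (l : ℝ)

lemma reflPt_involutive : Function.Involutive (reflPt n l) := by
  intro x
  ext i
  by_cases h : i = 0
  · subst h; simp [reflPt]
  · simp [reflPt, h]

lemma isometry_reflPt : Isometry (reflPt n l) := by
  refine Isometry.of_dist_eq fun x y => ?_
  rw [EuclideanSpace.dist_eq, EuclideanSpace.dist_eq]
  congr 1
  refine Finset.sum_congr rfl fun i _ => ?_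
  by_cases h : i = 0
  · subst h
    simp only [reflPt, if_true, Real.dist_eq]
    rw [show 2 * l - x 0 - (2 * l - y 0) = -(x 0 - y 0) by ring, abs_neg]
  · simp [reflPt, h]

def reflIsometryEquiv : En n ≃ᵢ En n where
  toEquiv := (reflPt_involutive n l).toPerm
  isometry_toFun := isometry_reflPt n l

@[simp]
lemma coe_reflIsometryEquiv : ⇑(reflIsometryEquiv n l) = reflPt n l := rfl

end Reflection

lemma one_add_norm_le_mul_dist {E : Type*} [SeminormedAddCommGroup E] {x y : E} {ε : ℝ}
    (hε : 0 < ε) (hy : ε ≤ dist x y) : 1 + ‖y‖ ≤ (1 + (1 + ‖x‖) / ε) * dist x y := by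
  have hxy : ‖y‖ ≤ ‖x‖ + dist x y := by
    simpa [dist_eq_norm, norm_sub_rev] using norm_le_norm_add_norm_sub' y x
  have : 1 + ‖x‖ ≤ (1 + ‖x‖) / ε * dist x y := by
    rw [div_mul_eq_mul_div, le_div_iff₀ hε]
    exact mul_le_mul_of_nonneg_left hy (by positivity)
  linarith

/-- The truncated integrals defining `(-Δ)^{σ/2} w (x)` exist. -/
def FracIntegrable (n : ℕ) (σ : ℝ) (w : En n → ℝ) (x : En n) : Prop :=
  ∀ ε > 0, IntegrableOn (fun y => (w x - w y) / dist x y ^ ((n : ℝ) + σ)) {y | ε ≤ dist x y}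

lemma measurableSet_setOf_le_dist {E : Type*} [PseudoMetricSpace E] [MeasurableSpace E]
    [OpensMeasurableSpace E] (x : E) (ε : ℝ) : MeasurableSet {y | ε ≤ dist x y} :=
  (isClosed_le continuous_const (continuous_const.dist continuous_id)).measurableSet

theorem MemL.fracIntegrable {n : ℕ} {σ : ℝ} {w : En n → ℝ} (hw : MemL n σ w) (hσ : 0 < σ)
    (x : En n) : FracIntegrable n σ w x := by
  intro ε hε
  set s : ℝ := (n : ℝ) + σ
  have hs : 0 < s := by positivity
  set K := (1 + (1 + ‖x‖) / ε) ^ s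
  have hmajorant : Integrable fun y : En n =>
      K * (|w x| * (1 + ‖y‖) ^ (-s)) + 2 * K * (|w y| / (1 + ‖y‖ ^ s)) :=
    ((integrable_one_add_norm (by simp [s, hσ])).const_mul _ |>.const_mul K).add
      (hw.2.const_mul _)
  refine hmajorant.integrableOn.mono' ?_ ?_
  · have hd : Continuous fun y : En n => dist x y ^ s :=
      (continuous_const.dist continuous_id).rpow_const fun _ => Or.inr hs.le
    exact ((aestronglyMeasurable_const.sub hw.1.aestronglyMeasurable).mul
      hd.measurable.inv.aestronglyMeasurable).restrict
  rw [ae_restrict_iff' (measurableSet_setOf_le_dist x ε)]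
  refine ae_of_all _ fun y (hy : ε ≤ dist x y) => ?_
  have hd : 0 < dist x y ^ s := Real.rpow_pos_of_pos (hε.trans_le hy) s
  have hy1 : 0 < (1 + ‖y‖) ^ s := by positivity
  have hbound : (1 + ‖y‖) ^ s ≤ K * dist x y ^ s := by
    rw [← Real.mul_rpow (by positivity) dist_nonneg]
    exact Real.rpow_le_rpow (by positivity) (one_add_norm_le_mul_dist hε hy) hs.le
  have hsum : 1 + ‖y‖ ^ s ≤ 2 * (1 + ‖y‖) ^ s := by
    have h1 : 1 ≤ (1 + ‖y‖) ^ s := Real.one_le_rpow (by linarith [norm_nonneg y]) hs.le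
    have h2 : ‖y‖ ^ s ≤ (1 + ‖y‖) ^ s :=
      Real.rpow_le_rpow (norm_nonneg y) (by linarith) hs.le
    linarith
  have hker : 1 / dist x y ^ s ≤ K * (1 + ‖y‖) ^ (-s) := by
    rw [Real.rpow_neg (by positivity), ← div_eq_mul_inv, div_le_div_iff₀ hd hy1]
    linarith
  have hker' : 1 / dist x y ^ s ≤ 2 * K / (1 + ‖y‖ ^ s) := by
    rw [div_le_div_iff₀ hd (by positivity)]
    nlinarith
  calc ‖(w x - w y) / dist x y ^ s‖
        ≤ |w x| * (1 / dist x y ^ s) + |w y| * (1 / dist x y ^ s) := by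
        rw [Real.norm_eq_abs, abs_div, abs_of_pos hd, ← add_mul, mul_one_div]
        gcongr
        exact abs_sub _ _
    _ ≤ |w x| * (K * (1 + ‖y‖) ^ (-s)) + |w y| * (2 * K / (1 + ‖y‖ ^ s)) := by gcongr
    _ = K * (|w x| * (1 + ‖y‖) ^ (-s)) + 2 * K * (|w y| / (1 + ‖y‖ ^ s)) := by ring

section Isometry

variable {n : ℕ} {σ c : ℝ} {w : En n → ℝ} (e : En n ≃ᵢ En n) {x : En n}

lemma IsometryEquiv.preimage_setOf_le_dist (ε : ℝ) :
    e ⁻¹' {z | ε ≤ dist (e x) z} = {y | ε ≤ dist x y} := by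
  ext y
  simp [e.dist_eq]

lemma IsometryEquiv.fracIntegrand_comp :
    (fun y => ((w ∘ e) x - (w ∘ e) y) / dist x y ^ ((n : ℝ) + σ)) =
      (fun z => (w (e x) - w z) / dist (e x) z ^ ((n : ℝ) + σ)) ∘ e := by
  ext y
  simp [e.dist_eq]

theorem FracIntegrable.comp_isometryEquiv (hw : FracIntegrable n σ w (e x)) :
    FracIntegrable n σ (w ∘ e) x := fun ε hε => by
  rw [e.fracIntegrand_comp, ← e.preimage_setOf_le_dist ε,
    e.measurePreserving_volume.integrableOn_comp_preimage e.toHomeomorph.measurableEmbedding]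
  exact hw ε hε

theorem HasFracLap.comp_isometryEquiv {L : ℝ} (hw : HasFracLap n σ c w (e x) L) :
    HasFracLap n σ c (w ∘ e) x L := by
  refine hw.congr fun ε => ?_
  rw [e.fracIntegrand_comp, ← e.preimage_setOf_le_dist (x := x) ε]
  exact congrArg (c * ·)
    (e.measurePreserving_volume.setIntegral_preimage_emb e.toHomeomorph.measurableEmbedding _ _).symm

end Isometry

theorem HasFracLap.sub {n : ℕ} {σ c : ℝ} {f g : En n → ℝ} {x : En n} {L₁ L₂ : ℝ}
    (hf : FracIntegrable n σ f x) (hg : FracIntegrable n σ g x)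
    (hLf : HasFracLap n σ c f x L₁) (hLg : HasFracLap n σ c g x L₂) :
    HasFracLap n σ c (fun y => f y - g y) x (L₁ - L₂) := by
  refine (Tendsto.sub hLf hLg).congr' ?_
  filter_upwards [self_mem_nhdsWithin] with ε (hε : 0 < ε)
  rw [← mul_sub, ← integral_sub (hf ε hε) (hg ε hε)]
  congr 2 with y
  ring

theorem HasFracLap.unique {n : ℕ} {σ c : ℝ} {w : En n → ℝ} {x : En n} {L₁ L₂ : ℝ}
    (h₁ : HasFracLap n σ c w x L₁) (h₂ : HasFracLap n σ c w x L₂) : L₁ = L₂ :=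
  tendsto_nhds_unique h₁ h₂

theorem statement12_general
    (n : ℕ) [NeZero n]
    (α : ℝ) (hα : 0 < α ∧ α < 2)
    (p : ℝ) (hp : 1 ≤ p)
    (cα : ℝ)
    (u v : En n → ℝ)
    (hu_L : MemL n α u)
    (hu_pos : ∀ x, 0 < u x) (hv_pos : ∀ x, 0 < v x)
    (heq_u : ∀ x, HasFracLap n α cα u x (v x * u x ^ (p - 1) - u x))
    (C₁ γ R : ℝ) (hC₁ : 0 < C₁) (hR : 0 < R)
    (hdecay : ∀ x : En n, R ≤ ‖x‖ → C₁ / ‖x‖ ^ γ ≤ u x)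
    (lam : ℝ) (xb : En n) (hxbR : R ≤ ‖xb‖)
    (hUneg : u (reflPt n lam xb) - u xb < 0) :
    ∀ L, HasFracLap n α cα (fun x => u (reflPt n lam x) - u x) xb L →
      u (reflPt n lam xb) ^ (p - 1) * (v (reflPt n lam xb) - v xb) +
        (p / C₁ * u xb ^ (p - 1) * v xb * ‖xb‖ ^ γ - 1) *
          (u (reflPt n lam xb) - u xb) ≤ L := by
  intro L hL
  set e := reflIsometryEquiv n lam
  have hU : HasFracLap n α cα (fun x => u (reflPt n lam x) - u x) xb
      ((v (e xb) * u (e xb) ^ (p - 1) - u (e xb)) - (v xb * u xb ^ (p - 1) - u xb)) :=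
    HasFracLap.sub ((hu_L.fracIntegrable hα.1 _).comp_isometryEquiv e)
      (hu_L.fracIntegrable hα.1 xb) ((heq_u _).comp_isometryEquiv e) (heq_u xb)
  rw [hL.unique hU, coe_reflIsometryEquiv]
  set a := u (reflPt n lam xb)
  set b := u xb
  have hb : 0 < b := hu_pos xb
  have hx : 0 < ‖xb‖ ^ γ := Real.rpow_pos_of_pos (hR.trans_le hxbR) γ
  have hinv : 1 / b ≤ ‖xb‖ ^ γ / C₁ :=
    (one_div_le hb (div_pos hx hC₁)).2 (by rw [one_div_div]; exact hdecay xb hxbR)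
  have hab : a ≤ b := (sub_neg.mp hUneg).le
  have hpb : 0 ≤ p * b ^ (p - 1) * (b - a) :=
    mul_nonneg (by positivity) (sub_nonneg.mpr hab)
  have key : b ^ (p - 1) - a ^ (p - 1) ≤ p / C₁ * b ^ (p - 1) * ‖xb‖ ^ γ * (b - a) :=
    calc b ^ (p - 1) - a ^ (p - 1) ≤ p * b ^ (p - 1) * (b - a) * (1 / b) := by
          rw [mul_one_div]; exact rpow_sub_one_sub_rpow_sub_one_le hp (hu_pos _) hab
      _ ≤ p * b ^ (p - 1) * (b - a) * (‖xb‖ ^ γ / C₁) := mul_le_mul_of_nonneg_left hinv hpb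
      _ = p / C₁ * b ^ (p - 1) * ‖xb‖ ^ γ * (b - a) := by ring
  linarith [mul_le_mul_of_nonneg_left key (hv_pos xb).le]

/-- the key estimate (r-4) for `(-Δ)^{α/2} U_λ` at a point
where `U_λ < 0`. -/
theorem statement12
    (n : ℕ) [NeZero n] (hn : 2 ≤ n)
    (α β : ℝ) (hα : 0 < α ∧ α < 2) (hβ : 0 < β ∧ β < 2)
    (p : ℝ) (hp : 1 ≤ p)
    (cα cβ : ℝ) (hcα : 0 < cα) (hcβ : 0 < cβ)
    (u v : En n → ℝ)
    (hu_reg : C11loc n u) (hu_L : MemL n α u)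
    (hv_reg : C11loc n v) (hv_L : MemL n β v)
    (hu_pos : ∀ x, 0 < u x) (hv_pos : ∀ x, 0 < v x)
    (heq_u : ∀ x, HasFracLap n α cα u x (v x * u x ^ (p - 1) - u x))
    (heq_v : ∀ x, HasFracLap n β cβ v x (u x ^ p))
    (C₁ γ R : ℝ) (hC₁ : 0 < C₁) (hγ : 0 < γ) (hR : 0 < R)
    (hdecay : ∀ x : En n, R ≤ ‖x‖ → C₁ / ‖x‖ ^ γ ≤ u x)
    (lam : ℝ) (xb : En n) (hxb : xb ∈ halfSpace n lam) (hxbR : R ≤ ‖xb‖)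
    (hUneg : u (reflPt n lam xb) - u xb < 0) :
    ∀ L, HasFracLap n α cα (fun x => u (reflPt n lam x) - u x) xb L →
      u (reflPt n lam xb) ^ (p - 1) * (v (reflPt n lam xb) - v xb) +
        (p / C₁ * u xb ^ (p - 1) * v xb * ‖xb‖ ^ γ - 1) *
          (u (reflPt n lam xb) - u xb) ≤ L :=
  statement12_general n α hα p hp cα u v hu_L hu_pos hv_pos heq_u C₁ γ R hC₁ hR hdecay lam xb hxbR
    hUneg
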